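/- arXiv:2605.14508 — 3 statements merged into one kernel-verified Lean document; each statement's English description precedes it below -/
import Mathlib

section
/- For the complete bipartite graph K_{m,n} with m,n ≥ 2, the characteristic polynomial of the eccentricity matrix is (t−2m+2)(t−2n+2)(t+2)^{m+n−2}. -/
open Matrix Polynomial Finset BigOperators

/-- The eccentricity of a vertex: maximum distance to any other vertex. -/
noncomputable def ecc {V : Type*} [Fintype V] (G : SimpleGraph V) (v : V) : ℕ :=
  Finset.univ.sup (G.dist v)

/-- The eccentricity matrix of a graph. -/
noncomputable def eccMatrix {V : Type*} [Fintype V] [DecidableEq V] (G : SimpleGraph V) : Matrix V V ℝ :=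
  Matrix.of fun i j =>
    if G.dist i j = min (ecc G i) (ecc G j) ∧ i ≠ j then (G.dist i j : ℝ) else 0

/-- The E-transmission of a vertex: the row sum of the eccentricity matrix. -/
noncomputable def eccTrans {V : Type*} [Fintype V] [DecidableEq V] (G : SimpleGraph V) (v : V) : ℝ :=
  ∑ j, eccMatrix G v j

/-- The eccentricity Laplacian. -/
noncomputable def eccLap {V : Type*} [Fintype V] [DecidableEq V] (G : SimpleGraph V) :
    Matrix V V ℝ :=
  Matrix.diagonal (eccTrans G) - eccMatrix G

/-- The eccentricity signless Laplacian. -/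
noncomputable def eccSignlessLap {V : Type*} [Fintype V] [DecidableEq V] (G : SimpleGraph V) :
    Matrix V V ℝ :=
  Matrix.diagonal (eccTrans G) + eccMatrix G

/-- The E-Wiener index. -/
noncomputable def eccWiener {V : Type*} [Fintype V] [DecidableEq V] (G : SimpleGraph V) : ℝ :=
  (1 / 2) * ∑ i, ∑ j, eccMatrix G i j

lemma det_field_aux {K : Type*} [Field K] {k : ℕ} (hk : 1 ≤ k) (a b : K) (ha : a ≠ 0) :
    Matrix.det (a • (1 : Matrix (Fin k) (Fin k) K) - b • Matrix.of (fun _ _ => (1:K))) =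
      (a - k * b) * a ^ (k - 1) := by
  have h : a • (1 : Matrix (Fin k) (Fin k) K) - b • Matrix.of (fun _ _ => (1:K)) =
      a • ((1 : Matrix (Fin k) (Fin k) K) +
        Matrix.replicateCol Unit (fun _ => -(b/a)) * Matrix.replicateRow Unit (fun _ => (1:K))) := by
    ext i j
    by_cases hij : i = j <;>
      simp [Matrix.mul_apply, Matrix.one_apply, hij, mul_comm, ha, mul_div_assoc,
        mul_div_cancel₀]
    · field_simp
      ring
  rw [h, Matrix.det_smul, Matrix.det_one_add_replicateCol_mul_replicateRow]
  have hak : a ^ k = a * a ^ (k - 1) := by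
    conv_lhs => rw [← Nat.succ_pred_eq_of_pos hk]
    rw [pow_succ']
    rfl
  simp only [dotProduct, Finset.sum_const, Finset.card_univ, Fintype.card_fin, nsmul_eq_mul,
    one_mul, Fintype.card_fin]
  rw [hak]
  field_simp
  ring

lemma charpoly_block (k : ℕ) (hk : 1 ≤ k) :
    (Matrix.of (fun i j : Fin k => if i = j then (0:ℝ) else 2)).charpoly =
      (X - C (2 * (k:ℝ) - 2)) * (X + C 2) ^ (k - 1) := by
  set K := FractionRing ℝ[X]
  have hinj : Function.Injective (algebraMap ℝ[X] K) := IsFractionRing.injective ℝ[X] K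
  set φ := algebraMap ℝ[X] K with hφ
  apply hinj
  rw [Matrix.charpoly, RingHom.map_det]
  have hmap : φ.mapMatrix (Matrix.of (fun i j : Fin k => if i = j then (0:ℝ) else 2)).charmatrix =
      φ (X + C 2) • (1 : Matrix (Fin k) (Fin k) K) - φ (C 2) • Matrix.of (fun _ _ => (1:K)) := by
    ext i j
    by_cases hij : i = j <;>
      simp [hij, Matrix.charmatrix_apply_eq, Matrix.charmatrix_apply_ne, Matrix.one_apply,
        map_add, map_neg, sub_eq_add_neg]
    ring
  have hXC : (X + C (2:ℝ)) ≠ 0 := Polynomial.X_add_C_ne_zero 2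
  have ha : φ (X + C 2) ≠ 0 := fun h => hXC (hinj (by rwa [map_zero]))
  rw [hmap, det_field_aux hk _ _ ha]
  rw [_root_.map_mul, map_pow]
  congr 1
  rw [← map_natCast φ, ← _root_.map_mul, ← map_sub]
  congr 1
  have hcast : ((k:ℝ[X]) : ℝ[X]) = C (k:ℝ) := by simp
  rw [hcast, ← Polynomial.C_mul]
  rw [show (2 * (k:ℝ) - 2) = ((k:ℝ)*2) + (-2) by ring, Polynomial.C_add]
  simp only [map_neg]
  ring

section Graph
variable {m n : ℕ}

lemma dist_lr (i : Fin m) (j : Fin n) :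
    (completeBipartiteGraph (Fin m) (Fin n)).dist (Sum.inl i) (Sum.inr j) = 1 :=
  SimpleGraph.dist_eq_one_iff_adj.mpr (by simp)

lemma dist_rl (i : Fin n) (j : Fin m) :
    (completeBipartiteGraph (Fin m) (Fin n)).dist (Sum.inr i) (Sum.inl j) = 1 :=
  SimpleGraph.dist_eq_one_iff_adj.mpr (by simp)

lemma dist_ll (hn : 1 ≤ n) {i j : Fin m} (hij : i ≠ j) :
    (completeBipartiteGraph (Fin m) (Fin n)).dist (Sum.inl i) (Sum.inl j) = 2 := by
  set G := completeBipartiteGraph (Fin m) (Fin n)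
  have ha1 : G.Adj (Sum.inl i) (Sum.inr (⟨0, by omega⟩ : Fin n)) := by simp [G]
  have ha2 : G.Adj (Sum.inr (⟨0, by omega⟩ : Fin n)) (Sum.inl j) := by simp [G]
  have hle : G.dist (Sum.inl i) (Sum.inl j) ≤ 2 := by
    simpa using SimpleGraph.dist_le (SimpleGraph.Walk.cons ha1 (SimpleGraph.Walk.cons ha2 SimpleGraph.Walk.nil))
  have h0 : G.dist (Sum.inl i) (Sum.inl j) ≠ 0 := by
    intro h
    rcases SimpleGraph.dist_eq_zero_iff_eq_or_not_reachable.mp h with h | h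
    · exact hij (Sum.inl_injective h)
    · exact h ⟨SimpleGraph.Walk.cons ha1 (SimpleGraph.Walk.cons ha2 SimpleGraph.Walk.nil)⟩
  have h1 : G.dist (Sum.inl i) (Sum.inl j) ≠ 1 := by
    intro h
    have := SimpleGraph.dist_eq_one_iff_adj.mp h
    simp [G] at this
  omega

lemma dist_rr (hm : 1 ≤ m) {i j : Fin n} (hij : i ≠ j) :
    (completeBipartiteGraph (Fin m) (Fin n)).dist (Sum.inr i) (Sum.inr j) = 2 := by
  set G := completeBipartiteGraph (Fin m) (Fin n)
  have ha1 : G.Adj (Sum.inr i) (Sum.inl (⟨0, by omega⟩ : Fin m)) := by simp [G]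
  have ha2 : G.Adj (Sum.inl (⟨0, by omega⟩ : Fin m)) (Sum.inr j) := by simp [G]
  have hle : G.dist (Sum.inr i) (Sum.inr j) ≤ 2 := by
    simpa using SimpleGraph.dist_le (SimpleGraph.Walk.cons ha1 (SimpleGraph.Walk.cons ha2 SimpleGraph.Walk.nil))
  have h0 : G.dist (Sum.inr i) (Sum.inr j) ≠ 0 := by
    intro h
    rcases SimpleGraph.dist_eq_zero_iff_eq_or_not_reachable.mp h with h | h
    · exact hij (Sum.inr_injective h)
    · exact h ⟨SimpleGraph.Walk.cons ha1 (SimpleGraph.Walk.cons ha2 SimpleGraph.Walk.nil)⟩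
  have h1 : G.dist (Sum.inr i) (Sum.inr j) ≠ 1 := by
    intro h
    have := SimpleGraph.dist_eq_one_iff_adj.mp h
    simp [G] at this
  omega

lemma ecc_inl (hm : 2 ≤ m) (hn : 1 ≤ n) (i : Fin m) :
    ecc (completeBipartiteGraph (Fin m) (Fin n)) (Sum.inl i) = 2 := by
  set G := completeBipartiteGraph (Fin m) (Fin n)
  apply le_antisymm
  · apply Finset.sup_le
    rintro (j | j) _
    · by_cases h : i = j
      · subst h; simp [SimpleGraph.dist_self]
      · rw [dist_ll hn h]
    · rw [dist_lr]; omega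
  · set j : Fin m := if i.val = 0 then ⟨1, by omega⟩ else ⟨0, by omega⟩ with hj
    have hij : i ≠ j := by
      intro h
      have hv := congrArg Fin.val h
      by_cases h0 : i.val = 0 <;> simp [hj, h0] at hv
    calc (2:ℕ) = G.dist (Sum.inl i) (Sum.inl j) := (dist_ll hn hij).symm
      _ ≤ _ := Finset.le_sup (Finset.mem_univ _)

lemma ecc_inr (hm : 1 ≤ m) (hn : 2 ≤ n) (i : Fin n) :
    ecc (completeBipartiteGraph (Fin m) (Fin n)) (Sum.inr i) = 2 := by
  set G := completeBipartiteGraph (Fin m) (Fin n)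
  apply le_antisymm
  · apply Finset.sup_le
    rintro (j | j) _
    · rw [dist_rl]; omega
    · by_cases h : i = j
      · subst h; simp [SimpleGraph.dist_self]
      · rw [dist_rr hm h]
  · set j : Fin n := if i.val = 0 then ⟨1, by omega⟩ else ⟨0, by omega⟩ with hj
    have hij : i ≠ j := by
      intro h
      have hv := congrArg Fin.val h
      by_cases h0 : i.val = 0 <;> simp [hj, h0] at hv
    calc (2:ℕ) = G.dist (Sum.inr i) (Sum.inr j) := (dist_rr hm hij).symm
      _ ≤ _ := Finset.le_sup (Finset.mem_univ _)

end Graph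


theorem stmt8 {m n : ℕ} (hm : 2 ≤ m) (hn : 2 ≤ n) :
    (eccMatrix (completeBipartiteGraph (Fin m) (Fin n))).charpoly =
      (X - C (2 * (m : ℝ) - 2)) * (X - C (2 * (n : ℝ) - 2)) * (X + C 2) ^ (m + n - 2) := by
  have hm1 : 1 ≤ m := by omega
  have hn1 : 1 ≤ n := by omega
  have hE : eccMatrix (completeBipartiteGraph (Fin m) (Fin n)) =
      Matrix.fromBlocks (Matrix.of (fun i j : Fin m => if i = j then (0:ℝ) else 2)) 0 0
        (Matrix.of (fun i j : Fin n => if i = j then (0:ℝ) else 2)) := by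
    ext u v
    rcases u with i | i <;> rcases v with j | j
    · by_cases h : i = j
      · subst h; simp [eccMatrix]
      · simp [eccMatrix, ecc_inl hm hn1, dist_ll hn1 h, h]
    · simp [eccMatrix, ecc_inl hm hn1, ecc_inr hm1 hn, dist_lr]
    · simp [eccMatrix, ecc_inl hm hn1, ecc_inr hm1 hn, dist_rl]
    · by_cases h : i = j
      · subst h; simp [eccMatrix]
      · simp [eccMatrix, ecc_inr hm1 hn, dist_rr hm1 h, h]
  rw [hE, Matrix.charpoly_fromBlocks_zero₂₁, charpoly_block m hm1, charpoly_block n hn1]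
  rw [show m + n - 2 = (m-1) + (n-1) by omega, pow_add]
  ring
end

section
/- Let G be a connected graph of diameter 2 on n vertices with no universal vertex, with Laplacian eigenvalues μ_1 ≥ … ≥ μ_{n−1} > μ_n = 0. Then the eccentricity Laplacian spectrum of G is {2n−2μ_{n−1}, 2n−2μ_{n−2}, …, 2n−2μ_1, 0}, and each Laplacian eigenvector of G is an eigenvector of E^L(G) for the corresponding eigenvalue. -/
open Matrix Polynomial Finset BigOperators

lemma charpoly_unitary_conj {m : Type*} [Fintype m] [DecidableEq m]
    (U : Matrix.unitaryGroup m ℝ) (A : Matrix m m ℝ) :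
    ((U : Matrix m m ℝ) * A * star (U : Matrix m m ℝ)).charpoly = A.charpoly := by
  set P : Matrix m m ℝ[X] := (U : Matrix m m ℝ).map C with hP
  set Q : Matrix m m ℝ[X] := (star (U : Matrix m m ℝ)).map C with hQ
  have hPQ : P * Q = 1 := by
    rw [hP, hQ, ← Matrix.map_mul, (Matrix.mem_unitaryGroup_iff).mp U.2]
    simp
  have hQP : Q * P = 1 := by
    rw [hP, hQ, ← Matrix.map_mul, (Matrix.mem_unitaryGroup_iff').mp U.2]
    simp
  have hchar : charmatrix ((U : Matrix m m ℝ) * A * star (U : Matrix m m ℝ))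
      = P * charmatrix A * Q := by
    rw [charmatrix, charmatrix]
    rw [Matrix.mul_sub, Matrix.sub_mul]
    congr 1
    · rw [scalar_apply, ← Matrix.smul_one_eq_diagonal, Matrix.mul_smul, Matrix.smul_mul, mul_one,
        hPQ]
    · simp only [RingHom.mapMatrix_apply, Matrix.map_mul, hP, hQ]
  unfold Matrix.charpoly
  rw [hchar, Matrix.det_mul, Matrix.det_mul, mul_comm, ← mul_assoc, ← Matrix.det_mul, hQP]
  simp

lemma charpoly_diag {n : ℕ} (d : Fin n → ℝ) :
    (Matrix.diagonal d).charpoly = ∏ i, (X - C (d i)) := by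
  rw [Matrix.charpoly_of_upperTriangular _ (Matrix.blockTriangular_diagonal d)]
  simp

theorem stmt15 {n : ℕ} (G : SimpleGraph (Fin n)) [DecidableRel G.Adj]
    (hG : G.Connected)
    (hdiam : (∀ u v, G.dist u v ≤ 2) ∧ ∃ u v, G.dist u v = 2)
    (huniv : ∀ v : Fin n, ∃ u, u ≠ v ∧ ¬ G.Adj v u)
    (hEL : (eccLap G).IsHermitian) (hLap : (G.lapMatrix ℝ).IsHermitian) :
    (Finset.univ.val.map hEL.eigenvalues =
      Finset.univ.val.map (fun i =>
        if hLap.eigenvalues i = 0 then 0 else 2 * (n : ℝ) - 2 * hLap.eigenvalues i)) ∧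
    (∀ (μ : ℝ) (x : Fin n → ℝ), x ≠ 0 → G.lapMatrix ℝ *ᵥ x = μ • x →
      eccLap G *ᵥ x = (if μ = 0 then (0 : ℝ) else 2 * (n : ℝ) - 2 * μ) • x) := by
  classical
  have hn : 0 < n := by
    obtain ⟨v⟩ := hG.nonempty
    exact v.pos
  -- the key structural identity: eccLap G = 2n•I - 2•J - 2•L
  have hecc : ∀ v, ecc G v = 2 := by
    intro v
    obtain ⟨u, hu, hna⟩ := huniv v
    have hd2 : G.dist v u = 2 := by
      have h0 : G.dist v u ≠ 0 := fun h => hu ((hG.dist_eq_zero_iff.mp h)).symm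
      have h1 : G.dist v u ≠ 1 := fun h => hna (SimpleGraph.dist_eq_one_iff_adj.mp h)
      have := hdiam.1 v u
      omega
    refine le_antisymm (Finset.sup_le fun u _ => hdiam.1 v u) ?_
    calc 2 = G.dist v u := hd2.symm
    _ ≤ _ := Finset.le_sup (Finset.mem_univ u)
  have hEM : eccMatrix G = (2:ℝ) • (Matrix.of fun _ _ => (1:ℝ)) - (2:ℝ) • G.adjMatrix ℝ
      - (2:ℝ) • (1 : Matrix (Fin n) (Fin n) ℝ) := by
    ext i j
    simp only [eccMatrix, Matrix.of_apply, hecc, min_self, Matrix.sub_apply, Matrix.smul_apply,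
      SimpleGraph.adjMatrix_apply, Matrix.one_apply, smul_eq_mul]
    by_cases hij : i = j
    · subst hij
      simp [G.irrefl]
    · by_cases hadj : G.Adj i j
      · have : G.dist i j = 1 := SimpleGraph.dist_eq_one_iff_adj.mpr hadj
        simp [hij, hadj, this]
      · have hd2 : G.dist i j = 2 := by
          have h0 : G.dist i j ≠ 0 := fun h => hij (hG.dist_eq_zero_iff.mp h)
          have h1 : G.dist i j ≠ 1 := fun h => hadj (SimpleGraph.dist_eq_one_iff_adj.mp h)
          have := hdiam.1 i j
          omega
        simp [hij, hadj, hd2]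
  have hdeg : ∀ i, ∑ j, G.adjMatrix ℝ i j = G.degree i := by
    intro i
    simp [SimpleGraph.adjMatrix_apply, SimpleGraph.degree, SimpleGraph.neighborFinset_eq_filter,
      Finset.sum_boole]
  have hTrans : ∀ i, eccTrans G i = 2*(n:ℝ) - 2*(G.degree i) - 2 := by
    intro i
    simp only [eccTrans, hEM, Matrix.sub_apply, Matrix.smul_apply, smul_eq_mul, Matrix.of_apply,
      Finset.sum_sub_distrib, ← Finset.mul_sum, hdeg]
    simp [Matrix.one_apply, Finset.sum_ite_eq, mul_comm]
  have hkey : eccLap G = (2*(n:ℝ)) • (1 : Matrix (Fin n) (Fin n) ℝ)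
      - (2:ℝ) • (Matrix.of fun _ _ => (1:ℝ)) - (2:ℝ) • G.lapMatrix ℝ := by
    ext i j
    by_cases hij : i = j
    · subst hij
      simp only [eccLap, Matrix.sub_apply, Matrix.diagonal_apply_eq, hTrans, hEM,
        Matrix.smul_apply, Matrix.of_apply, smul_eq_mul, Matrix.one_apply_eq,
        SimpleGraph.lapMatrix, SimpleGraph.degMatrix, Matrix.diagonal_apply_eq,
        SimpleGraph.adjMatrix_apply, G.irrefl, if_false]
      ring
    · simp only [eccLap, Matrix.sub_apply, Matrix.diagonal_apply_ne _ hij, hEM,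
        Matrix.smul_apply, Matrix.of_apply, smul_eq_mul, Matrix.one_apply_ne hij,
        SimpleGraph.lapMatrix, SimpleGraph.degMatrix, Matrix.diagonal_apply_ne _ hij,
        SimpleGraph.adjMatrix_apply]
      by_cases hadj : G.Adj i j <;> simp [hadj]
  -- row and column sums of the Laplacian vanish
  have hrow : ∀ a : Fin n, ∑ b, G.lapMatrix ℝ a b = 0 := by
    intro a
    have := congrFun (G.lapMatrix_mulVec_const_eq_zero (R := ℝ)) a
    simpa [Matrix.mulVec, dotProduct] using this
  have hcolzero : ∀ b : Fin n, ∑ a, G.lapMatrix ℝ a b = 0 := by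
    intro b
    have hsymm := G.isSymm_lapMatrix (R := ℝ)
    calc ∑ a, G.lapMatrix ℝ a b = ∑ a, G.lapMatrix ℝ b a :=
          Finset.sum_congr rfl fun a _ => (hsymm.apply b a)
    _ = 0 := hrow b
  have hcolsum : ∀ x : Fin n → ℝ, ∑ a, (G.lapMatrix ℝ *ᵥ x) a = 0 := by
    intro x
    calc ∑ a, (G.lapMatrix ℝ *ᵥ x) a = ∑ a, ∑ b, G.lapMatrix ℝ a b * x b := rfl
    _ = ∑ b, (∑ a, G.lapMatrix ℝ a b) * x b := by
        rw [Finset.sum_comm]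
        simp [Finset.sum_mul]
    _ = 0 := by simp [hcolzero]
  have hconst : ∀ x : Fin n → ℝ, G.lapMatrix ℝ *ᵥ x = 0 → ∀ a b, x a = x b := by
    intro x hx a b
    have := (G.lapMatrix_mulVec_eq_zero_iff_forall_reachable (x := x)).mp
      (by exact hx)
    exact this a b (hG.preconnected a b)
  have hJx : ∀ x : Fin n → ℝ, (Matrix.of fun _ _ => (1:ℝ) : Matrix (Fin n) (Fin n) ℝ) *ᵥ x = fun _ => ∑ b, x b := by
    intro x
    ext a
    simp [Matrix.mulVec, dotProduct]
  -- the eigenvector statement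
  have hvec : ∀ (μ : ℝ) (x : Fin n → ℝ), x ≠ 0 → G.lapMatrix ℝ *ᵥ x = μ • x →
      eccLap G *ᵥ x = (if μ = 0 then (0 : ℝ) else 2 * (n : ℝ) - 2 * μ) • x := by
    intro μ x hx0 hx
    by_cases hμ : μ = 0
    · subst hμ
      rw [zero_smul] at hx
      have hc := hconst x hx
      simp only [if_pos rfl, zero_smul]
      rw [hkey]
      ext a
      simp only [Matrix.sub_mulVec, Matrix.smul_mulVec, Matrix.one_mulVec, hx, hJx,
        Pi.sub_apply, Pi.smul_apply, smul_eq_mul, Pi.zero_apply]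
      have hsum : ∑ b, x b = n * x a := by
        rw [Finset.sum_congr rfl fun b _ => hc b a]
        simp [Finset.card_univ, mul_comm]
      rw [hsum]
      simp only [if_true]
      ring
    · have hsum : ∑ b, x b = 0 := by
        have h1 : μ * ∑ b, x b = 0 := by
          have := hcolsum x
          rw [hx] at this
          simpa [Finset.mul_sum] using this
        rcases mul_eq_zero.mp h1 with h | h
        · exact absurd h hμ
        · exact h
      rw [if_neg hμ, hkey]
      ext a
      simp only [Matrix.sub_mulVec, Matrix.smul_mulVec, Matrix.one_mulVec, hx, hJx, hsum,
        Pi.sub_apply, Pi.smul_apply, smul_eq_mul]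
      ring
  refine ⟨?_, hvec⟩
  -- the spectrum statement
  set U := hLap.eigenvectorUnitary with hUdef
  set B := hLap.eigenvectorBasis with hBdef
  set e := hLap.eigenvalues with hedef
  have hON : ∀ i j, (∑ a, B i a * B j a) = if i = j then (1:ℝ) else 0 := by
    intro i j
    have h := orthonormal_iff_ite.mp B.orthonormal i j
    simpa [PiLp.inner_apply, RCLike.inner_apply, starRingEnd_apply, mul_comm] using h
  have hBvec : ∀ j, G.lapMatrix ℝ *ᵥ (fun a => B j a) = fun a => e j * B j a := by
    intro j
    have h := hLap.mulVec_eigenvectorBasis j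
    ext a
    have h2 := congrFun h a
    simpa using h2
  have hs0 : ∀ j, e j ≠ 0 → ∑ a, B j a = 0 := by
    intro j hj
    have h2 : e j * ∑ a, B j a = 0 := by
      have h := hcolsum (fun a => B j a)
      rw [hBvec j] at h
      simpa [Finset.mul_sum] using h
    rcases mul_eq_zero.mp h2 with h | h
    · exact absurd h hj
    · exact h
  have hBc : ∀ j, e j = 0 → ∀ a b, B j a = B j b := by
    intro j hj
    apply hconst (fun a => B j a)
    rw [hBvec j]
    funext a
    rw [hj]
    simp
  have hBnz : ∀ j, (∑ a, B j a * B j a) = 1 := by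
    intro j
    have := hON j j
    rwa [if_pos rfl] at this
  have hzero_unique : ∀ j k, e j = 0 → e k = 0 → j = k := by
    intro j k hj hk
    by_contra hne
    have h0 := hON j k
    rw [if_neg hne] at h0
    set a0 : Fin n := ⟨0, hn⟩
    have hj' := hBc j hj
    have hk' := hBc k hk
    have hsum : ∑ a, B j a * B k a = (n : ℝ) * (B j a0 * B k a0) := by
      rw [Finset.sum_congr rfl fun b _ => by rw [hj' b a0, hk' b a0]]
      simp [Finset.card_univ]
    rw [hsum] at h0
    have hnne : (n : ℝ) ≠ 0 := Nat.cast_ne_zero.mpr hn.ne'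
    rcases mul_eq_zero.mp h0 with h | h
    · exact hnne h
    · rcases mul_eq_zero.mp h with h' | h'
      · have := hBnz j
        rw [Finset.sum_congr rfl fun b _ => by rw [hj' b a0, h']] at this
        simpa using this
      · have := hBnz k
        rw [Finset.sum_congr rfl fun b _ => by rw [hk' b a0, h']] at this
        simpa using this
  have hsq : ∀ j, e j = 0 → (∑ a, B j a) * (∑ a, B j a) = (n : ℝ) := by
    intro j hj
    set a0 : Fin n := ⟨0, hn⟩
    have hc := hBc j hj
    have h1 : ∑ a, B j a = (n : ℝ) * B j a0 := by
      rw [Finset.sum_congr rfl fun b _ => hc b a0]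
      simp [Finset.card_univ]
    have h2 := hBnz j
    have h3 : ∑ a, B j a * B j a = (n : ℝ) * (B j a0 * B j a0) := by
      rw [Finset.sum_congr rfl fun b _ => by rw [hc b a0]]
      simp [Finset.card_univ]
    rw [h3] at h2
    rw [h1]
    calc (n : ℝ) * B j a0 * ((n : ℝ) * B j a0) = (n : ℝ) * ((n : ℝ) * (B j a0 * B j a0)) := by
          ring
    _ = (n : ℝ) := by rw [h2, mul_one]
  set f : Fin n → ℝ := fun i => if e i = 0 then 0 else 2 * (n : ℝ) - 2 * e i with hf
  have hUJU : star (U : Matrix (Fin n) (Fin n) ℝ) * (Matrix.of fun _ _ => (1:ℝ) : Matrix (Fin n) (Fin n) ℝ)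
      * (U : Matrix (Fin n) (Fin n) ℝ)
      = Matrix.diagonal (fun j => if e j = 0 then (n : ℝ) else 0) := by
    ext j k
    have hentry : (star (U : Matrix (Fin n) (Fin n) ℝ) * (Matrix.of fun _ _ => (1:ℝ) : Matrix (Fin n) (Fin n) ℝ)
        * (U : Matrix (Fin n) (Fin n) ℝ)) j k = (∑ a, B j a) * (∑ b, B k b) := by
      rw [hUdef]
      simp only [Matrix.mul_apply, Matrix.star_apply, star_trivial, Matrix.of_apply, mul_one,
        Matrix.IsHermitian.eigenvectorUnitary_apply, ← hBdef]
      rw [← Finset.mul_sum]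
    rw [hentry]
    by_cases hjk : j = k
    · subst hjk
      rw [Matrix.diagonal_apply_eq]
      by_cases hj : e j = 0
      · rw [if_pos hj]
        exact hsq j hj
      · rw [if_neg hj, hs0 j hj, zero_mul]
    · rw [Matrix.diagonal_apply_ne _ hjk]
      by_cases hj : e j = 0
      · have hk : e k ≠ 0 := fun h => hjk (hzero_unique j k hj h)
        rw [hs0 k hk, mul_zero]
      · rw [hs0 j hj, zero_mul]
  have hULU : star (U : Matrix (Fin n) (Fin n) ℝ) * G.lapMatrix ℝ
      * (U : Matrix (Fin n) (Fin n) ℝ) = Matrix.diagonal e := by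
    have h : star (U : Matrix (Fin n) (Fin n) ℝ) * G.lapMatrix ℝ * (U : Matrix (Fin n) (Fin n) ℝ)
        = Matrix.diagonal (RCLike.ofReal ∘ hLap.eigenvalues) :=
      hLap.conjStarAlgAut_star_eigenvectorUnitary
    rw [h]
    congr 1
  have hUU : star (U : Matrix (Fin n) (Fin n) ℝ) * (U : Matrix (Fin n) (Fin n) ℝ) = 1 :=
    (Matrix.mem_unitaryGroup_iff').mp U.2
  have hUU' : (U : Matrix (Fin n) (Fin n) ℝ) * star (U : Matrix (Fin n) (Fin n) ℝ) = 1 :=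
    (Matrix.mem_unitaryGroup_iff).mp U.2
  have hdiagEq : star (U : Matrix (Fin n) (Fin n) ℝ) * eccLap G
      * (U : Matrix (Fin n) (Fin n) ℝ) = Matrix.diagonal f := by
    rw [hkey]
    simp only [Matrix.mul_sub, Matrix.sub_mul, Matrix.mul_smul, Matrix.smul_mul, Matrix.mul_one]
    rw [hUU, hUJU, hULU]
    ext j k
    by_cases hjk : j = k
    · subst hjk
      simp only [Matrix.sub_apply, Matrix.smul_apply, Matrix.one_apply_eq,
        Matrix.diagonal_apply_eq, smul_eq_mul, hf]
      by_cases hj : e j = 0 <;> simp [hj] <;> ring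
    · simp only [Matrix.sub_apply, Matrix.smul_apply, Matrix.one_apply_ne hjk,
        Matrix.diagonal_apply_ne _ hjk, smul_eq_mul, mul_zero, sub_zero, sub_self]
  have hconj : eccLap G = (U : Matrix (Fin n) (Fin n) ℝ) * Matrix.diagonal f
      * star (U : Matrix (Fin n) (Fin n) ℝ) := by
    rw [← hdiagEq]
    rw [← Matrix.mul_assoc, ← Matrix.mul_assoc, hUU', Matrix.one_mul, Matrix.mul_assoc, hUU',
      Matrix.mul_one]
  have hcp1 : (eccLap G).charpoly = ∏ i, (X - C (f i)) := by
    rw [hconj, charpoly_unitary_conj, charpoly_diag]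
  have hcp2 : (eccLap G).charpoly = ∏ i, (X - C (hEL.eigenvalues i)) := by
    conv_lhs => rw [hEL.spectral_theorem, Unitary.conjStarAlgAut_apply]
    rw [charpoly_unitary_conj]
    have h : (RCLike.ofReal ∘ hEL.eigenvalues : Fin n → ℝ) = hEL.eigenvalues := rfl
    rw [h, charpoly_diag]
  have key : ∀ g : Fin n → ℝ, (eccLap G).charpoly = ∏ i, (X - C (g i)) →
      (eccLap G).charpoly.roots = Finset.univ.val.map g := by
    intro g hg
    rw [hg]
    have h : ∏ i, (X - C (g i)) = ((Finset.univ.val.map g).map (fun a => X - C a)).prod := by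
      rw [Multiset.map_map]
      rfl
    rw [h, Polynomial.roots_multiset_prod_X_sub_C]
  exact (key _ hcp2).symm.trans (key _ hcp1)
end

section
/- Let G be a connected r-regular graph of diameter 2 on n vertices (so r < n−1) with signless Laplacian eigenvalues q_1 = 2r ≥ q_2 ≥ … ≥ q_n. Then the eccentricity signless Laplacian spectrum of G is {4(n−r−1), 2n−4−2q_2, …, 2n−4−2q_n}, with the same corresponding eigenvectors as the signless Laplacian. -/
open Matrix Polynomial Finset BigOperators

/-- The (ordinary) signless Laplacian matrix of a graph. -/
noncomputable def signlessLap {V : Type*} [Fintype V] [DecidableEq V]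
    (G : SimpleGraph V) [DecidableRel G.Adj] : Matrix V V ℝ :=
  Matrix.diagonal (fun v => (G.degree v : ℝ)) + G.adjMatrix ℝ

section Aux

variable {m : Type*} [Fintype m] [DecidableEq m]

private lemma charpoly_conj_aux (U V M : Matrix m m ℝ) (hUV : U * V = 1) :
    (U * M * V).charpoly = M.charpoly := by
  have hmap : charmatrix (U * M * V) =
      U.map (C : ℝ →+* ℝ[X]) * charmatrix M * V.map (C : ℝ →+* ℝ[X]) := by
    have hcomm : Matrix.scalar m (X : ℝ[X]) * U.map (C : ℝ →+* ℝ[X])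
        = U.map (C : ℝ →+* ℝ[X]) * Matrix.scalar m (X : ℝ[X]) :=
      (Matrix.scalar_commute (X : ℝ[X]) (fun r' => Commute.all _ _) _).eq
    have hone : U.map (C : ℝ →+* ℝ[X]) * V.map (C : ℝ →+* ℝ[X]) = 1 := by
      rw [← Matrix.map_mul, hUV, Matrix.map_one _ (map_zero _) (map_one _)]
    unfold charmatrix
    simp only [RingHom.mapMatrix_apply]
    rw [Matrix.map_mul, Matrix.map_mul, mul_sub, sub_mul, ← hcomm,
      mul_assoc (Matrix.scalar m (X : ℝ[X])), hone, mul_one]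
  unfold Matrix.charpoly
  rw [hmap, Matrix.det_mul_right_comm, ← Matrix.map_mul, hUV,
    Matrix.map_one _ (map_zero _) (map_one _), one_mul]

private lemma charpoly_diagonal_aux (d : m → ℝ) :
    (Matrix.diagonal d).charpoly = ∏ i, (X - C (d i)) := by
  have h : charmatrix (Matrix.diagonal d) = Matrix.diagonal (fun i => X - C (d i)) := by
    ext i j
    by_cases hij : i = j
    · subst hij; simp
    · simp [hij, charmatrix_apply_ne _ _ _ hij, Matrix.diagonal_apply_ne _ hij]
  rw [Matrix.charpoly, h, Matrix.det_diagonal]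

private lemma charpoly_hermitian_aux {M : Matrix m m ℝ} (hM : M.IsHermitian) :
    M.charpoly = ∏ i, (X - C (hM.eigenvalues i)) := by
  conv_lhs => rw [hM.spectral_theorem, Unitary.conjStarAlgAut_apply]
  rw [charpoly_conj_aux _ _ _ ((Matrix.mem_unitaryGroup_iff).mp (hM.eigenvectorUnitary).2)]
  have : (RCLike.ofReal ∘ hM.eigenvalues : m → ℝ) = hM.eigenvalues := by
    funext i; simp
  rw [this, charpoly_diagonal_aux]

private lemma roots_prod_aux (a : m → ℝ) :
    (∏ i, (X - C (a i))).roots = Finset.univ.val.map a := by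
  have h : ∏ i, (X - C (a i)) =
      ((Finset.univ.val.map a).map fun t => X - C t).prod := by
    rw [Multiset.map_map]
    rfl
  rw [h, Polynomial.roots_multiset_prod_X_sub_C]

end Aux

theorem stmt16 {n : ℕ} (G : SimpleGraph (Fin n)) [DecidableRel G.Adj] (r : ℕ)
    (hG : G.Connected) (hreg : G.IsRegularOfDegree r)
    (hdiam : (∀ u v, G.dist u v ≤ 2) ∧ ∃ u v, G.dist u v = 2)
    (hQE : (eccSignlessLap G).IsHermitian) (hQ : (signlessLap G).IsHermitian) :
    (Finset.univ.val.map hQE.eigenvalues =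
      Finset.univ.val.map (fun i =>
        if hQ.eigenvalues i = 2 * (r : ℝ) then 4 * ((n : ℝ) - r - 1)
        else 2 * (n : ℝ) - 4 - 2 * hQ.eigenvalues i)) ∧
    (∀ (q : ℝ) (x : Fin n → ℝ), x ≠ 0 → signlessLap G *ᵥ x = q • x →
      eccSignlessLap G *ᵥ x =
        (if q = 2 * (r : ℝ) then 4 * ((n : ℝ) - r - 1)
         else 2 * (n : ℝ) - 4 - 2 * q) • x) := by
  classical
  obtain ⟨hle2, u0, v0, huv⟩ := hdiam
  have hne0 : u0 ≠ v0 := by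
    intro h; rw [h, SimpleGraph.dist_self] at huv; exact two_ne_zero huv.symm
  have hnadj0 : ¬ G.Adj u0 v0 := by
    intro h
    rw [SimpleGraph.dist_eq_one_iff_adj.2 h] at huv
    norm_num at huv
  have hdist2 : ∀ i j : Fin n, i ≠ j → ¬ G.Adj i j → G.dist i j = 2 := by
    intro i j hij hadj
    have h0 : G.dist i j ≠ 0 := (hG.pos_dist_of_ne hij).ne'
    have h1 : G.dist i j ≠ 1 := fun h => hadj (SimpleGraph.dist_eq_one_iff_adj.1 h)
    have h2 := hle2 i j
    omega
  have hn2 : 2 ≤ n := by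
    have : 1 < Fintype.card (Fin n) := Fintype.one_lt_card_iff.2 ⟨u0, v0, hne0⟩
    exact (by simpa using this : 1 < n)
  have hrn : r + 2 ≤ n := by
    have hsub : G.neighborFinset u0 ⊆ ((Finset.univ : Finset (Fin n)).erase v0).erase u0 := by
      intro w hw
      rw [SimpleGraph.mem_neighborFinset] at hw
      refine Finset.mem_erase.2 ⟨fun h => G.irrefl (h ▸ hw), Finset.mem_erase.2
        ⟨fun h => hnadj0 (h ▸ hw), Finset.mem_univ w⟩⟩
    have hcard := Finset.card_le_card hsub
    rw [SimpleGraph.card_neighborFinset_eq_degree, hreg u0,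
      Finset.card_erase_of_mem (Finset.mem_erase.2 ⟨hne0, Finset.mem_univ u0⟩),
      Finset.card_erase_of_mem (Finset.mem_univ v0), Finset.card_univ, Fintype.card_fin] at hcard
    omega
  have hecc : ∀ v, ecc G v = 2 := by
    intro v
    apply le_antisymm
    · exact Finset.sup_le fun j _ => hle2 v j
    · obtain ⟨w, hwv, hnadj⟩ : ∃ w, v ≠ w ∧ ¬ G.Adj v w := by
        by_contra h
        push_neg at h
        have hsub : (Finset.univ : Finset (Fin n)).erase v ⊆ G.neighborFinset v := by
          intro w hw
          rw [SimpleGraph.mem_neighborFinset]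
          exact h w (Ne.symm (Finset.ne_of_mem_erase hw))
        have hcard := Finset.card_le_card hsub
        rw [SimpleGraph.card_neighborFinset_eq_degree, hreg v,
          Finset.card_erase_of_mem (Finset.mem_univ v), Finset.card_univ,
          Fintype.card_fin] at hcard
        omega
      calc 2 = G.dist v w := (hdist2 v w hwv hnadj).symm
      _ ≤ ecc G v := Finset.le_sup (Finset.mem_univ w)
  have hM : ∀ i j, eccMatrix G i j = if i ≠ j ∧ ¬ G.Adj i j then 2 else 0 := by
    intro i j
    show (if G.dist i j = min (ecc G i) (ecc G j) ∧ i ≠ j then (G.dist i j : ℝ) else 0) = _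
    rw [hecc i, hecc j]
    by_cases hij : i = j
    · subst hij; simp
    · by_cases hadj : G.Adj i j
      · have h1 := SimpleGraph.dist_eq_one_iff_adj.2 hadj
        simp [hij, hadj, h1]
      · have h2 := hdist2 i j hij hadj
        simp [hij, hadj, h2]
  have hTrans : ∀ v, eccTrans G v = 2 * ((n : ℝ) - r - 1) := by
    intro v
    show (∑ j, eccMatrix G v j) = _
    have h1 : ∀ j, eccMatrix G v j = if v ≠ j ∧ ¬ G.Adj v j then (2:ℝ) else 0 := fun j => hM v j
    simp only [h1]
    rw [Finset.sum_ite, Finset.sum_const, Finset.sum_const, smul_zero, add_zero,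
      nsmul_eq_mul]
    have hfil : Finset.univ.filter (fun j => v ≠ j ∧ ¬ G.Adj v j)
        = (insert v (G.neighborFinset v))ᶜ := by
      ext w
      simp only [Finset.mem_filter, Finset.mem_univ, true_and, Finset.mem_compl,
        Finset.mem_insert, SimpleGraph.mem_neighborFinset, not_or]
      constructor
      · rintro ⟨h1, h2⟩; exact ⟨fun h => h1 (h.symm), h2⟩
      · rintro ⟨h1, h2⟩; exact ⟨fun h => h1 (h.symm), h2⟩
    rw [hfil, Finset.card_compl, Finset.card_insert_of_notMem
      (SimpleGraph.notMem_neighborFinset_self G v),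
      SimpleGraph.card_neighborFinset_eq_degree, hreg v, Fintype.card_fin]
    rw [Nat.cast_sub (by omega : r + 1 ≤ n)]
    push_cast
    ring
  -- column sums of the signless Laplacian are 2r
  have hcolA : ∀ j, (∑ i, G.adjMatrix ℝ i j) = (r : ℝ) := by
    intro j
    have h1 : ∀ i : Fin n, G.adjMatrix ℝ i j = G.adjMatrix ℝ j i := by
      intro i; rw [← Matrix.transpose_apply (G.adjMatrix ℝ) i j, SimpleGraph.transpose_adjMatrix]
    rw [Finset.sum_congr rfl fun i _ => (h1 i).trans (SimpleGraph.adjMatrix_apply G j i)]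
    rw [Finset.sum_boole, ← SimpleGraph.neighborFinset_eq_filter,
      SimpleGraph.card_neighborFinset_eq_degree, hreg j]
  have hcolQ : ∀ j, (∑ i, signlessLap G i j) = 2 * (r : ℝ) := by
    intro j
    show (∑ i, (Matrix.diagonal (fun v => (G.degree v : ℝ)) + G.adjMatrix ℝ) i j) = _
    simp only [Matrix.add_apply, Finset.sum_add_distrib]
    rw [hcolA j]
    have : (∑ i, Matrix.diagonal (fun v => (G.degree v : ℝ)) i j) = (r : ℝ) := by
      rw [Finset.sum_eq_single j]
      · simp [hreg j]
      · intro b _ hb; exact Matrix.diagonal_apply_ne _ hb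
      · intro h; exact absurd (Finset.mem_univ j) h
    rw [this]; ring
  -- Part 2 : the eigenvector statement
  have key : ∀ (q : ℝ) (x : Fin n → ℝ), x ≠ 0 → signlessLap G *ᵥ x = q • x →
      eccSignlessLap G *ᵥ x =
        (if q = 2 * (r : ℝ) then 4 * ((n : ℝ) - r - 1)
         else 2 * (n : ℝ) - 4 - 2 * q) • x := by
    intro q x hx hQx
    have hAx : ∀ i, (G.adjMatrix ℝ *ᵥ x) i = (q - r) * x i := by
      intro i
      have h := congr_fun hQx i
      have hd : signlessLap G *ᵥ x = (Matrix.diagonal (fun v => (G.degree v : ℝ))) *ᵥ x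
          + G.adjMatrix ℝ *ᵥ x := by
        show (Matrix.diagonal _ + G.adjMatrix ℝ) *ᵥ x = _
        rw [Matrix.add_mulVec]
      rw [hd] at h
      simp only [Pi.add_apply, Matrix.mulVec_diagonal, Pi.smul_apply, smul_eq_mul, hreg i] at h
      linarith
    set S := ∑ j, x j with hSdef
    have hsum : q * S = 2 * (r : ℝ) * S := by
      have h1 : (∑ i, (signlessLap G *ᵥ x) i) = q * S := by
        rw [hQx]; simp only [Pi.smul_apply, smul_eq_mul]; rw [← Finset.mul_sum]
      have h2 : (∑ i, (signlessLap G *ᵥ x) i) = 2 * (r : ℝ) * S := by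
        calc (∑ i, (signlessLap G *ᵥ x) i) = ∑ i, ∑ j, signlessLap G i j * x j := rfl
        _ = ∑ j, (∑ i, signlessLap G i j) * x j := by
              rw [Finset.sum_comm]
              exact Finset.sum_congr rfl fun j _ => (Finset.sum_mul _ _ _).symm
        _ = ∑ j, 2 * (r : ℝ) * x j := Finset.sum_congr rfl fun j _ => by rw [hcolQ j]
        _ = 2 * (r : ℝ) * S := by rw [← Finset.mul_sum]
      rw [← h1, h2]
    have hEx : ∀ i, (eccSignlessLap G *ᵥ x) i
        = 2 * ((n : ℝ) - r - 1) * x i + (2 * S - 2 * x i - 2 * ((q - r) * x i)) := by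
      intro i
      have hd : eccSignlessLap G *ᵥ x = (Matrix.diagonal (eccTrans G)) *ᵥ x
          + eccMatrix G *ᵥ x := by
        show (Matrix.diagonal _ + eccMatrix G) *ᵥ x = _
        rw [Matrix.add_mulVec]
      rw [hd]
      simp only [Pi.add_apply, Matrix.mulVec_diagonal, hTrans i]
      congr 1
      have hterm : ∀ j, eccMatrix G i j * x j
          = 2 * x j - ((if i = j then 2 * x j else 0) + (if G.Adj i j then 2 * x j else 0)) := by
        intro j
        rw [hM i j]
        by_cases h1 : i = j
        · subst h1; simp [G.irrefl]
        · by_cases h2 : G.Adj i j <;> simp [h1, h2]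
      calc (eccMatrix G *ᵥ x) i = ∑ j, eccMatrix G i j * x j := rfl
      _ = ∑ j, (2 * x j - ((if i = j then 2 * x j else 0) + (if G.Adj i j then 2 * x j else 0)))
            := Finset.sum_congr rfl fun j _ => hterm j
      _ = (∑ j, 2 * x j) - ((∑ j, if i = j then 2 * x j else 0)
            + (∑ j, if G.Adj i j then 2 * x j else 0)) := by
            rw [Finset.sum_sub_distrib, Finset.sum_add_distrib]
      _ = 2 * S - 2 * x i - 2 * ((q - r) * x i) := by
            rw [← Finset.mul_sum, Finset.sum_ite_eq Finset.univ i (fun j => 2 * x j)]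
            have h3 : (∑ j, if G.Adj i j then 2 * x j else 0) = 2 * ((q - r) * x i) := by
              rw [← hAx i, SimpleGraph.adjMatrix_mulVec_apply, ← Finset.sum_filter,
                ← SimpleGraph.neighborFinset_eq_filter, Finset.mul_sum]
            rw [h3]
            simp [Finset.mem_univ]
            ring
    by_cases hq : q = 2 * (r : ℝ)
    · -- x is constant
      have hAx' : ∀ i, (∑ j ∈ G.neighborFinset i, x j) = (r : ℝ) * x i := by
        intro i
        have := hAx i
        rw [SimpleGraph.adjMatrix_mulVec_apply] at this
        rw [this, hq]; ring
      have hn0 : (Finset.univ : Finset (Fin n)).Nonempty := by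
        rw [Finset.univ_nonempty_iff]
        exact Fin.pos_iff_nonempty.mp (by omega)
      obtain ⟨i0, _, hmax⟩ := Finset.exists_max_image Finset.univ x hn0
      set mx := x i0 with hmx
      have step : ∀ u v : Fin n, G.Adj u v → x u = mx → x v = mx := by
        intro u v huv hu
        by_contra hv
        have hvlt : x v < mx := lt_of_le_of_ne (hmax v (Finset.mem_univ v)) hv
        have hlt : (∑ j ∈ G.neighborFinset u, x j) < ∑ j ∈ G.neighborFinset u, mx :=
          Finset.sum_lt_sum (fun j _ => hmax j (Finset.mem_univ j))
            ⟨v, (SimpleGraph.mem_neighborFinset G u v).2 huv, hvlt⟩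
        rw [hAx' u, hu, Finset.sum_const, SimpleGraph.card_neighborFinset_eq_degree,
          hreg u, nsmul_eq_mul] at hlt
        exact lt_irrefl _ hlt
      have hwalk : ∀ (a b : Fin n) (_ : G.Walk a b), x a = mx → x b = mx := by
        intro a b p
        induction p with
        | nil => exact id
        | cons h _ ih => exact fun ha => ih (step _ _ h ha)
      have hall : ∀ w, x w = mx := by
        intro w
        obtain ⟨p⟩ := hG.preconnected i0 w
        exact hwalk i0 w p rfl
      have hSm : S = (n : ℝ) * mx := by
        rw [hSdef]
        rw [Finset.sum_congr rfl fun j _ => hall j, Finset.sum_const, Finset.card_univ,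
          Fintype.card_fin, nsmul_eq_mul]
      funext i
      rw [hEx i, if_pos hq, Pi.smul_apply, smul_eq_mul, hall i, hSm, hq]
      ring
    · have hS0 : S = 0 := by
        by_contra h
        exact hq (mul_right_cancel₀ h hsum)
      funext i
      rw [hEx i, if_neg hq, Pi.smul_apply, smul_eq_mul, hS0]
      ring
  refine ⟨?_, key⟩
  -- Part 1 : the spectrum
  set f : ℝ → ℝ := fun t => if t = 2 * (r : ℝ) then 4 * ((n : ℝ) - r - 1)
    else 2 * (n : ℝ) - 4 - 2 * t with hf
  set U : Matrix (Fin n) (Fin n) ℝ := (hQ.eigenvectorUnitary : Matrix (Fin n) (Fin n) ℝ) with hU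
  have hUU : U * star U = 1 := (Matrix.mem_unitaryGroup_iff).mp (hQ.eigenvectorUnitary).2
  have hEU : eccSignlessLap G * U = U * Matrix.diagonal (f ∘ hQ.eigenvalues) := by
    ext i j
    have hcol : (fun k => U k j) = ⇑(hQ.eigenvectorBasis j) := by
      funext k
      exact hQ.eigenvectorUnitary_apply k j
    have hne : (fun k => U k j) ≠ 0 := by
      rw [hcol]
      intro h
      exact hQ.eigenvectorBasis.orthonormal.ne_zero j (by ext k; exact congr_fun h k)
    have hQv : signlessLap G *ᵥ (fun k => U k j) = hQ.eigenvalues j • (fun k => U k j) := by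
      rw [hcol]
      exact hQ.mulVec_eigenvectorBasis j
    have hEv := key (hQ.eigenvalues j) (fun k => U k j) hne hQv
    have h1 : (eccSignlessLap G * U) i j = (eccSignlessLap G *ᵥ (fun k => U k j)) i := by
      simp [Matrix.mul_apply, Matrix.mulVec, dotProduct]
    rw [h1, hEv, Matrix.mul_diagonal, Pi.smul_apply, smul_eq_mul, Function.comp_apply, hf]
    ring
  have hE : eccSignlessLap G = U * Matrix.diagonal (f ∘ hQ.eigenvalues) * star U := by
    calc eccSignlessLap G = eccSignlessLap G * (U * star U) := by rw [hUU, mul_one]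
    _ = (eccSignlessLap G * U) * star U := by rw [mul_assoc]
    _ = U * Matrix.diagonal (f ∘ hQ.eigenvalues) * star U := by rw [hEU]
  have c1 : (eccSignlessLap G).charpoly = ∏ i, (X - C (f (hQ.eigenvalues i))) := by
    rw [hE, charpoly_conj_aux _ _ _ hUU, charpoly_diagonal_aux]
    rfl
  have c2 : (eccSignlessLap G).charpoly = ∏ i, (X - C (hQE.eigenvalues i)) :=
    charpoly_hermitian_aux hQE
  have hroots : Finset.univ.val.map hQE.eigenvalues
      = Finset.univ.val.map (f ∘ hQ.eigenvalues) := by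
    rw [← roots_prod_aux hQE.eigenvalues, ← roots_prod_aux (f ∘ hQ.eigenvalues), ← c2, c1]
    rfl
  exact hroots
end
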